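/- Let G be a countable discrete group with a topological partial action on a locally compact Hausdorff space X, R' = {(x,r,s) : x ∈ X_{r⁻¹s}} the associated étale groupoid, and k_c(D) the *-algebra of finitely supported functions k : G × G → ⋃ C_c(X_t)δ_t with k(r,s) ∈ C_c(X_{rs⁻¹})δ_{rs⁻¹}, with multiplication (k₁*k₂)(r,s) = ∑_t k₁(r,t)k₂(t,s) and involution k*(r,s) = k(s,r)*. Then the map ψ : C_c(R') → k_c(D), ψ(f)(r,s) = f_{r⁻¹,s⁻¹} δ_{rs⁻¹} (where f_{r,s} is the restriction of f to R'_{r,s} = {(x,r,s) : x ∈ X_{r⁻¹s}} viewed in C_c(X_{r⁻¹s})), is a *-algebra isomorphism, where C_c(R') carries the groupoid convolution product. -/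

import Mathlib

/-- A partial action of a group `G` on a set `X`. -/
structure PartialAction (G : Type*) [Group G] (X : Type*) where
  dom : G → Set X
  h : G → X → X
  dom_one : dom 1 = Set.univ
  h_one : ∀ x, h 1 x = x
  bijOn : ∀ t, Set.BijOn (h t) (dom t⁻¹) (dom t)
  image_inter : ∀ t s, h t '' (dom t⁻¹ ∩ dom s) = dom t ∩ dom (t * s)
  hcomp : ∀ t s x, x ∈ dom s⁻¹ ∩ dom (s⁻¹ * t⁻¹) → h t (h s x) = h (t * s) x

/-- A topological partial action: the domains are open and each `h t` is a homeomorphism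
of `X_{t⁻¹}` onto `X_t` (continuity of the inverse is `continuousOn t⁻¹`). -/
structure TopPartialAction (G : Type*) [Group G] (X : Type*) [TopologicalSpace X]
    extends PartialAction G X where
  isOpen_dom : ∀ t, IsOpen (dom t)
  continuousOn : ∀ t, ContinuousOn (h t) (dom t⁻¹)

/-- The relation `(r,x) ∼ (s,y) ↔ x ∈ X_{r⁻¹s} ∧ h_{s⁻¹r}(x) = y`. -/
def PartialAction.rel {G X : Type*} [Group G] (θ : PartialAction G X) :
    G × X → G × X → Prop :=
  fun p q => p.2 ∈ θ.dom (p.1⁻¹ * q.1) ∧ θ.h (q.1⁻¹ * p.1) p.2 = q.2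

variable {G X : Type*} [Group G] [TopologicalSpace G] [DiscreteTopology G] [TopologicalSpace X]

/-- The étale groupoid `R' = {(x,r,s) : x ∈ X_{r⁻¹s}}` of a partial action. -/
def Rprime (θ : TopPartialAction G X) : Set (X × G × G) :=
  {q | q.1 ∈ θ.dom (q.2.1⁻¹ * q.2.2)}

/-- `C_c(R')`: continuous compactly supported functions on `R'`. -/
def CcR (θ : TopPartialAction G X) : Set (↥(Rprime θ) → ℂ) :=
  {f | Continuous f ∧ HasCompactSupport f}

open Classical in
/-- The groupoid convolution product on functions on `R'`:
`(f*g)(x,r,u) = ∑_s f(x,r,s)·g(h_{s⁻¹r}(x),s,u)` over composable factorizations. -/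
noncomputable def conv (θ : TopPartialAction G X) (f g : ↥(Rprime θ) → ℂ) :
    ↥(Rprime θ) → ℂ :=
  fun p => ∑ᶠ s : G,
    if hx : p.val.1 ∈ θ.dom (p.val.2.1⁻¹ * s) ∧
        θ.h (s⁻¹ * p.val.2.1) p.val.1 ∈ θ.dom (s⁻¹ * p.val.2.2) then
      f ⟨(p.val.1, p.val.2.1, s), hx.1⟩ *
        g ⟨(θ.h (s⁻¹ * p.val.2.1) p.val.1, s, p.val.2.2), hx.2⟩
    else 0

/-- The groupoid involution on functions on `R'`: `f*(x,r,s) = conj f(h_{s⁻¹r}(x),s,r)`. -/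
noncomputable def starC (θ : TopPartialAction G X) (f : ↥(Rprime θ) → ℂ) :
    ↥(Rprime θ) → ℂ :=
  fun p => starRingEnd ℂ (f ⟨(θ.h (p.val.2.2⁻¹ * p.val.2.1) p.val.1, p.val.2.2, p.val.2.1),
    (θ.bijOn (p.val.2.2⁻¹ * p.val.2.1)).mapsTo (by
      have h := p.2
      simp only [Rprime, Set.mem_setOf_eq] at h
      simpa [mul_inv_rev] using h)⟩)

open Classical in
/-- The Fell-bundle product of fibers, as in the envelope algebra. -/
noncomputable def fellMul (θ : TopPartialAction G X) (a b : G) (f g : X → ℂ) : X → ℂ :=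
  fun x => if x ∈ θ.dom a ∧ θ.h a⁻¹ x ∈ θ.dom b then f x * g (θ.h a⁻¹ x) else 0

open Classical in
/-- The Fell-bundle involution on fibers. -/
noncomputable def fellStar (θ : TopPartialAction G X) (a : G) (f : X → ℂ) : X → ℂ :=
  fun x => if x ∈ θ.dom a⁻¹ then starRingEnd ℂ (f (θ.h a x)) else 0

/-- `k_c(D)`: finitely supported functions `k : G × G → ⋃ C_c(X_t)δ_t` with
`k(r,s) ∈ C_c(X_{rs⁻¹})δ_{rs⁻¹}` (here `k r s` is the function part of the fiber). -/
def KcD (θ : TopPartialAction G X) : Set (G → G → X → ℂ) :=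
  {k | {q : G × G | k q.1 q.2 ≠ 0}.Finite ∧
    ∀ r s, Continuous (k r s) ∧ HasCompactSupport (k r s) ∧
      tsupport (k r s) ⊆ θ.dom (r * s⁻¹)}

/-- The multiplication `(k₁ * k₂)(r,s) = ∑_t k₁(r,t)·k₂(t,s)` of `k_c(D)`. -/
noncomputable def kmul (θ : TopPartialAction G X) (k₁ k₂ : G → G → X → ℂ) :
    G → G → X → ℂ :=
  fun r s x => ∑ᶠ t : G, fellMul θ (r * t⁻¹) (t * s⁻¹) (k₁ r t) (k₂ t s) x

/-- The involution `k*(r,s) = k(s,r)*` of `k_c(D)`. -/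
noncomputable def kstar (θ : TopPartialAction G X) (k : G → G → X → ℂ) :
    G → G → X → ℂ :=
  fun r s => fellStar θ (s * r⁻¹) (k s r)

open Classical in
/-- The map `ψ : C_c(R') → k_c(D)`, `ψ(f)(r,s) = f_{r⁻¹,s⁻¹}δ_{rs⁻¹}`, where `f_{a,b}`
is the restriction of `f` to `R'_{a,b} = {(x,a,b) : x ∈ X_{a⁻¹b}}`. -/
noncomputable def psi (θ : TopPartialAction G X) (f : ↥(Rprime θ) → ℂ) :
    G → G → X → ℂ :=
  fun r s x => if hx : x ∈ θ.dom (r⁻¹⁻¹ * s⁻¹) then f ⟨(x, r⁻¹, s⁻¹), hx⟩ else 0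


namespace PartialAction

variable {G₀ X₀ : Type*} [Group G₀]

lemma h_mapsTo (θ : PartialAction G₀ X₀) {a : G₀} {x : X₀} (hx : x ∈ θ.dom a⁻¹) :
    θ.h a x ∈ θ.dom a := (θ.bijOn a).mapsTo hx

lemma h_inv_h (θ : PartialAction G₀ X₀) {a : G₀} {x : X₀} (hx : x ∈ θ.dom a⁻¹) :
    θ.h a⁻¹ (θ.h a x) = x := by
  rw [θ.hcomp a⁻¹ a x ⟨hx, by simp [θ.dom_one]⟩, inv_mul_cancel, θ.h_one]

lemma dom_trans (θ : PartialAction G₀ X₀) {a b : G₀} {x : X₀} (h1 : x ∈ θ.dom a)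
    (h2 : θ.h a⁻¹ x ∈ θ.dom b) : x ∈ θ.dom (a * b) := by
  have hy : θ.h a⁻¹ x ∈ θ.dom a⁻¹ := θ.h_mapsTo (by simpa using h1)
  have hmem : θ.h a (θ.h a⁻¹ x) ∈ θ.h a '' (θ.dom a⁻¹ ∩ θ.dom b) := ⟨_, ⟨hy, h2⟩, rfl⟩
  rw [θ.image_inter a b] at hmem
  have hx : θ.h a⁻¹⁻¹ (θ.h a⁻¹ x) = x := θ.h_inv_h (by simpa using h1)
  rw [inv_inv] at hx
  rw [hx] at hmem
  exact hmem.2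

end PartialAction

section Helpers

set_option linter.unusedSectionVars false

variable {G X : Type*} [Group G] [TopologicalSpace G] [DiscreteTopology G] [TopologicalSpace X]

lemma f_congr (θ : TopPartialAction G X) (f : ↥(Rprime θ) → ℂ) {x y : X} {a b c d : G}
    (hxy : x = y) (hac : a = c) (hbd : b = d) (h1 : (x, a, b) ∈ Rprime θ)
    (h2 : (y, c, d) ∈ Rprime θ) : f ⟨(x, a, b), h1⟩ = f ⟨(y, c, d), h2⟩ := by
  subst hxy; subst hac; subst hbd; rfl

lemma psi_apply' (θ : TopPartialAction G X) (f : ↥(Rprime θ) → ℂ) (r s : G) (x : X)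
    (hx : x ∈ θ.dom (r⁻¹ * s)) : psi θ f r⁻¹ s⁻¹ x = f ⟨(x, r, s), hx⟩ := by
  have hx' : x ∈ θ.dom (r⁻¹⁻¹⁻¹ * s⁻¹⁻¹) := by simpa using hx
  simp only [psi]
  rw [dif_pos hx']
  exact f_congr θ f rfl (inv_inv r) (inv_inv s) _ _

lemma psi_add (θ : TopPartialAction G X) (f g : ↥(Rprime θ) → ℂ) :
    psi θ (f + g) = psi θ f + psi θ g := by
  funext r s x
  simp only [psi, Pi.add_apply]
  split <;> simp

lemma psi_smul (θ : TopPartialAction G X) (c : ℂ) (f : ↥(Rprime θ) → ℂ) :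
    psi θ (c • f) = c • psi θ f := by
  funext r s x
  simp only [psi, Pi.smul_apply, smul_eq_mul]
  split <;> simp

lemma psi_star (θ : TopPartialAction G X) (f : ↥(Rprime θ) → ℂ) :
    psi θ (starC θ f) = kstar θ (psi θ f) := by
  funext r s x
  simp only [psi, kstar, fellStar, starC]
  by_cases hx : x ∈ θ.dom (r⁻¹⁻¹ * s⁻¹)
  · have hx2 : x ∈ θ.dom ((s * r⁻¹)⁻¹) := by simpa [mul_inv_rev] using hx
    rw [dif_pos hx, if_pos hx2]
    have hy : θ.h (s * r⁻¹) x ∈ θ.dom (s⁻¹⁻¹ * r⁻¹) := by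
      simpa using θ.toPartialAction.h_mapsTo hx2
    rw [dif_pos hy]
    congr 1
    exact f_congr θ f (by rw [inv_inv]) rfl rfl _ _
  · have hx2 : x ∉ θ.dom ((s * r⁻¹)⁻¹) := by simpa [mul_inv_rev] using hx
    rw [dif_neg hx, if_neg hx2]

lemma psi_mul (θ : TopPartialAction G X) (f g : ↥(Rprime θ) → ℂ) :
    psi θ (conv θ f g) = kmul θ (psi θ f) (psi θ g) := by
  funext r s x
  by_cases hx : x ∈ θ.dom (r⁻¹⁻¹ * s⁻¹)
  · simp only [psi, kmul]
    rw [dif_pos hx]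
    simp only [conv]
    refine Eq.trans (finsum_comp_equiv (Equiv.inv G)).symm (finsum_congr fun t => ?_)
    simp only [Equiv.inv_apply, fellMul]
    by_cases hc : x ∈ θ.dom (r * t⁻¹) ∧ θ.h (r * t⁻¹)⁻¹ x ∈ θ.dom (t * s⁻¹)
    · have hC1 : x ∈ θ.dom (r⁻¹⁻¹ * t⁻¹) ∧
          θ.h (t⁻¹⁻¹ * r⁻¹) x ∈ θ.dom (t⁻¹⁻¹ * s⁻¹) :=
        ⟨by simpa using hc.1, by simpa [mul_inv_rev] using hc.2⟩
      rw [dif_pos (c := (x ∈ θ.dom (r⁻¹⁻¹ * (Equiv.inv G) t) ∧ θ.h (((Equiv.inv G) t)⁻¹ * r⁻¹) x ∈ θ.dom (((Equiv.inv G) t)⁻¹ * s⁻¹))) hC1, if_pos hc]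
      simp only [psi]
      have hg : θ.h (r * t⁻¹)⁻¹ x ∈ θ.dom (t⁻¹⁻¹ * s⁻¹) := by
        simpa [mul_inv_rev] using hc.2
      rw [dif_pos hC1.1, dif_pos hg]
      refine congrArg₂ (· * ·) rfl (f_congr θ g ?_ rfl rfl _ _)
      rw [mul_inv_rev, inv_inv]
    · have hC1 : ¬(x ∈ θ.dom (r⁻¹⁻¹ * t⁻¹) ∧
          θ.h (t⁻¹⁻¹ * r⁻¹) x ∈ θ.dom (t⁻¹⁻¹ * s⁻¹)) := by
        rintro ⟨h1, h2⟩
        exact hc ⟨by simpa using h1, by simpa [mul_inv_rev] using h2⟩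
      rw [dif_neg (c := (x ∈ θ.dom (r⁻¹⁻¹ * (Equiv.inv G) t) ∧ θ.h (((Equiv.inv G) t)⁻¹ * r⁻¹) x ∈ θ.dom (((Equiv.inv G) t)⁻¹ * s⁻¹))) hC1, if_neg hc]
  · simp only [psi, kmul]
    rw [dif_neg hx]
    refine ((finsum_congr fun t => ?_).trans finsum_zero).symm
    simp only [fellMul]
    rw [if_neg]
    rintro ⟨h1, h2⟩
    have := θ.toPartialAction.dom_trans h1 h2
    have e : r * t⁻¹ * (t * s⁻¹) = r⁻¹⁻¹ * s⁻¹ := by group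
    rw [e] at this
    exact hx this

lemma psi_mem_KcD [T2Space X] (θ : TopPartialAction G X) (f : ↥(Rprime θ) → ℂ)
    (hf : f ∈ CcR θ) : psi θ f ∈ KcD θ := by
  obtain ⟨hfc, hfs⟩ := hf
  have hcs : IsCompact (Subtype.val '' tsupport f) := hfs.image continuous_subtype_val
  constructor
  · have hT : (Prod.snd '' (Subtype.val '' tsupport f)).Finite :=
      (hcs.image continuous_snd).finite (IsDiscrete.univ.mono (Set.subset_univ _))
    refine Set.Finite.subset (hT.image fun q => (q.1⁻¹, q.2⁻¹)) ?_
    rintro ⟨r, s⟩ hq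
    simp only [Set.mem_setOf_eq] at hq
    obtain ⟨x, hxne⟩ := Function.ne_iff.mp hq
    have hx : x ∈ θ.dom (r⁻¹⁻¹ * s⁻¹) := by
      by_contra hx
      exact hxne (by simp only [psi]; exact dif_neg hx)
    have hmem : (⟨(x, r⁻¹, s⁻¹), hx⟩ : ↥(Rprime θ)) ∈ tsupport f := by
      refine subset_closure (Function.mem_support.mpr ?_)
      intro h0
      apply hxne
      simp only [psi]
      rw [dif_pos hx, h0]
      rfl
    exact ⟨(r⁻¹, s⁻¹), ⟨(x, r⁻¹, s⁻¹), ⟨⟨(x, r⁻¹, s⁻¹), hx⟩, hmem, rfl⟩, rfl⟩, by simp⟩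
  · intro r s
    set K := Prod.fst '' (Subtype.val '' tsupport f ∩ Prod.snd ⁻¹' {(r⁻¹, s⁻¹)}) with hKdef
    have hKc : IsCompact K :=
      (hcs.inter_right ((isClosed_singleton).preimage continuous_snd)).image continuous_fst
    have hKU : K ⊆ θ.dom (r⁻¹⁻¹ * s⁻¹) := by
      rintro x ⟨p, ⟨⟨pt, hpt, rfl⟩, hp2⟩, rfl⟩
      have hmem := pt.2
      simp only [Rprime, Set.mem_setOf_eq] at hmem
      have h2 : (pt : X × G × G).2 = (r⁻¹, s⁻¹) := hp2
      rw [h2] at hmem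
      simpa using hmem
    have hsub : Function.support (psi θ f r s) ⊆ K := by
      intro x hxs
      simp only [Function.mem_support, psi] at hxs
      by_cases hx : x ∈ θ.dom (r⁻¹⁻¹ * s⁻¹)
      · rw [dif_pos hx] at hxs
        exact ⟨(x, r⁻¹, s⁻¹),
          ⟨⟨⟨(x, r⁻¹, s⁻¹), hx⟩, subset_closure (Function.mem_support.mpr hxs), rfl⟩, rfl⟩, rfl⟩
      · exact absurd (dif_neg hx) hxs
    have htsub : tsupport (psi θ f r s) ⊆ K := closure_minimal hsub hKc.isClosed
    have hco : ContinuousOn (psi θ f r s) (θ.dom (r⁻¹⁻¹ * s⁻¹)) := by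
      rw [continuousOn_iff_continuous_restrict]
      have heq : (θ.dom (r⁻¹⁻¹ * s⁻¹)).domRestrict (psi θ f r s) =
          fun y : ↥(θ.dom (r⁻¹⁻¹ * s⁻¹)) => f ⟨((y : X), r⁻¹, s⁻¹), y.2⟩ := by
        funext y
        exact dif_pos y.2
      rw [heq]
      exact hfc.comp (Continuous.subtype_mk
        (continuous_subtype_val.prodMk continuous_const) _)
    have hcont : Continuous (psi θ f r s) := by
      rw [continuous_iff_continuousAt]
      intro x
      by_cases hx : x ∈ θ.dom (r⁻¹⁻¹ * s⁻¹)
      · exact hco.continuousAt ((θ.isOpen_dom _).mem_nhds hx)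
      · have hxK : x ∉ K := fun h => hx (hKU h)
        have hev : psi θ f r s =ᶠ[nhds x] (fun _ => 0) := by
          filter_upwards [hKc.isClosed.isOpen_compl.mem_nhds hxK] with y hy
          exact Function.notMem_support.mp (fun hs => hy (hsub hs))
        exact (continuousAt_congr hev).mpr continuousAt_const
    refine ⟨hcont, hKc.of_isClosed_subset isClosed_closure htsub, ?_⟩
    have : θ.dom (r⁻¹⁻¹ * s⁻¹) = θ.dom (r * s⁻¹) := by rw [inv_inv]
    rw [← this]
    exact htsub.trans hKU

end Helpers

lemma psi_injOn (θ : TopPartialAction G X) : Set.InjOn (psi θ) (CcR θ) := by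
  intro f _ g _ hfg
  funext p
  obtain ⟨⟨x, r, s⟩, hx⟩ := p
  rw [← psi_apply' θ f r s x hx, ← psi_apply' θ g r s x hx, hfg]

lemma psi_surjOn [T2Space X] (θ : TopPartialAction G X) :
    Set.SurjOn (psi θ) (CcR θ) (KcD θ) := by
  rintro k ⟨hfin, hk⟩
  set f : ↥(Rprime θ) → ℂ := fun p => k p.val.2.1⁻¹ p.val.2.2⁻¹ p.val.1 with hfdef
  have hpsi : psi θ f = k := by
    funext r s x
    simp only [psi]
    by_cases hx : x ∈ θ.dom (r⁻¹⁻¹ * s⁻¹)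
    · rw [dif_pos hx]
      simp only [hfdef, inv_inv]
    · rw [dif_neg hx]
      by_contra hne
      have hxd : x ∈ θ.dom (r * s⁻¹) :=
        (hk r s).2.2 (subset_closure (Function.mem_support.mpr (Ne.symm hne)))
      exact hx (by simpa using hxd)
  have hcontf : Continuous f := by
    rw [continuous_iff_continuousAt]
    intro p
    set c := (p : X × G × G).2 with hc
    set V := (fun q : ↥(Rprime θ) => (q : X × G × G).2) ⁻¹' {c} with hV
    have hVo : IsOpen V :=
      (isOpen_discrete _).preimage (continuous_snd.comp continuous_subtype_val)
    have hco : ContinuousOn f V := by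
      rw [continuousOn_iff_continuous_restrict]
      have heq : V.domRestrict f = fun q : V => k c.1⁻¹ c.2⁻¹ (q : ↥(Rprime θ)).val.1 := by
        funext q
        have hq : (q : ↥(Rprime θ)).val.2 = c := q.2
        simp only [Set.domRestrict_apply, hfdef]
        rw [hq]
      rw [heq]
      exact (hk _ _).1.comp
        (continuous_fst.comp (continuous_subtype_val.comp continuous_subtype_val))
    exact hco.continuousAt (hVo.mem_nhds rfl)
  have hcs : HasCompactSupport f := by
    classical
    set C : Set (X × G × G) :=
      ⋃ q ∈ {q : G × G | k q.1 q.2 ≠ 0},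
        (fun x => (x, q.1⁻¹, q.2⁻¹)) '' tsupport (k q.1 q.2) with hC
    have hCc : IsCompact C :=
      hfin.isCompact_biUnion fun q _ =>
        ((hk q.1 q.2).2.1).image (continuous_id.prodMk continuous_const)
    have hsub : Function.support f ⊆ Subtype.val ⁻¹' C := by
      intro p hp
      simp only [hfdef, Function.mem_support] at hp
      refine Set.mem_preimage.mpr (Set.mem_biUnion
        (show (p.val.2.1⁻¹, p.val.2.2⁻¹) ∈ {q : G × G | k q.1 q.2 ≠ 0} from
          Function.ne_iff.mpr ⟨_, hp⟩) ?_)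
      exact ⟨p.val.1, subset_closure (Function.mem_support.mpr hp), by simp [Prod.ext_iff]⟩
    have hCR : C ⊆ Rprime θ := by
      intro z hz
      simp only [hC, Set.mem_iUnion, Set.mem_image, Set.mem_setOf_eq] at hz
      obtain ⟨q, hq, x, hxs, rfl⟩ := hz
      have hxd : x ∈ θ.dom (q.1 * q.2⁻¹) := (hk q.1 q.2).2.2 hxs
      simpa [Rprime] using hxd
    have hpre : IsCompact (Subtype.val ⁻¹' C : Set ↥(Rprime θ)) := by
      rw [Topology.IsEmbedding.subtypeVal.isCompact_iff]
      rwa [Subtype.image_preimage_coe, Set.inter_eq_self_of_subset_right hCR]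
    exact hpre.of_isClosed_subset isClosed_closure
      (closure_minimal hsub ((hCc.isClosed.preimage continuous_subtype_val)))
  exact ⟨f, ⟨hcontf, hcs⟩, hpsi⟩

/-- For a topological partial action of a countable discrete group `G` on a locally
compact Hausdorff space `X`, the map `ψ : C_c(R') → k_c(D)` given by
`ψ(f)(r,s) = f_{r⁻¹,s⁻¹}δ_{rs⁻¹}` is a *-algebra isomorphism, where `C_c(R')` carries the
groupoid convolution product. -/
theorem psi_star_algebra_iso [Countable G]
    [LocallyCompactSpace X] [T2Space X] (θ : TopPartialAction G X) :
    Set.BijOn (psi θ) (CcR θ) (KcD θ) ∧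
    (∀ f g : ↥(Rprime θ) → ℂ, psi θ (f + g) = psi θ f + psi θ g) ∧
    (∀ (c : ℂ) (f : ↥(Rprime θ) → ℂ), psi θ (c • f) = c • psi θ f) ∧
    (∀ f ∈ CcR θ, ∀ g ∈ CcR θ, psi θ (conv θ f g) = kmul θ (psi θ f) (psi θ g)) ∧
    (∀ f ∈ CcR θ, psi θ (starC θ f) = kstar θ (psi θ f)) := by
  exact ⟨⟨fun f hf => psi_mem_KcD θ f hf, psi_injOn θ, psi_surjOn θ⟩,
    psi_add θ, psi_smul θ, fun f _ g _ => psi_mul θ f g, fun f _ => psi_star θ f⟩
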